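/- arXiv:1511.09078 — 3 statements merged into one kernel-verified Lean document; each statement's English description precedes it below -/
import Mathlib

section
/- Let y ∈ ℝ^p, let d₁,…,d_p be positive numbers with D = diag(d₁,…,d_p), let λ₁ ≥ … ≥ λ_p ≥ 0, and let b* be the unique minimizer of f(b) = ½‖y − Db‖₂² + J_λ(b) over ℝ^p. If y ⪰ 0 (all coordinates of y are nonnegative), then b* ⪰ 0. -/
/-- The nonincreasing rearrangement of the absolute values of the coordinates of `b`. -/
noncomputable def sortedAbs {p : ℕ} (b : Fin p → ℝ) : Fin p → ℝ :=
  fun i => |b (Tuple.sort (fun j => |b j|) (Fin.rev i))|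

/-- The sorted ℓ₁ norm `J_λ(b) = Σ_i λ_i |b|_{(i)}`. -/
noncomputable def Jlam {p : ℕ} (lam b : Fin p → ℝ) : ℝ :=
  ∑ i, lam i * sortedAbs b i

/-- The SLOPE objective with diagonal design matrix `D = diag(d₁,…,d_p)`:
`f(b) = ½ ‖y − D b‖₂² + J_λ(b)`. -/
noncomputable def slopeObj {p : ℕ} (d y lam : Fin p → ℝ) (b : Fin p → ℝ) : ℝ :=
  (1 / 2) * ∑ i, (y i - d i * b i) ^ 2 + Jlam lam b

/-! Replacing `b` by its positive part `b⁺` does not increase any `|bᵢ|`, hence does not increase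
`J_λ(b)`: by the rearrangement inequality `J_λ(b)` is the largest of the sums `Σ λᵢ |b_{σ(i)}|`, and
each such sum is monotone in `|b|` since `λ ⪰ 0`. For `y ⪰ 0` and `d ≻ 0` it strictly decreases
`(yᵢ - dᵢ bᵢ)²` wherever `bᵢ < 0`. So a minimizer has no negative coordinate. -/

open Finset

lemma sortedAbs_antitone {p : ℕ} (b : Fin p → ℝ) : Antitone (sortedAbs b) :=
  fun _ _ hij => Tuple.monotone_sort (fun j => |b j|) (Fin.rev_le_rev.mpr hij)

section SortedL1

variable {p : ℕ} {lam : Fin p → ℝ}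

lemma sum_mul_abs_comp_perm_le_Jlam (hlam : Antitone lam) (b : Fin p → ℝ)
    (σ : Equiv.Perm (Fin p)) : ∑ i, lam i * |b (σ i)| ≤ Jlam lam b := by
  set ρ : Equiv.Perm (Fin p) :=
    σ.trans ((Tuple.sort fun j => |b j|).symm.trans Fin.revPerm)
  have hρ : ∀ i, |b (σ i)| = sortedAbs b (ρ i) := by
    simp only [sortedAbs, ρ, Equiv.trans_apply, Fin.revPerm_apply, Fin.rev_rev,
      Equiv.apply_symm_apply, implies_true]
  simp_rw [hρ]
  exact (hlam.monovary (sortedAbs_antitone b)).sum_mul_comp_perm_le_sum_mul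

lemma Jlam_le_of_abs_le (hlam : Antitone lam) (hlam_nonneg : ∀ i, 0 ≤ lam i)
    {b c : Fin p → ℝ} (hcb : ∀ i, |c i| ≤ |b i|) : Jlam lam c ≤ Jlam lam b := by
  set σ : Equiv.Perm (Fin p) := Fin.revPerm.trans (Tuple.sort fun j => |c j|)
  calc Jlam lam c = ∑ i, lam i * |c (σ i)| := rfl
    _ ≤ ∑ i, lam i * |b (σ i)| :=
      sum_le_sum fun i _ => mul_le_mul_of_nonneg_left (hcb _) (hlam_nonneg i)
    _ ≤ Jlam lam b := sum_mul_abs_comp_perm_le_Jlam hlam b σ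

end SortedL1

lemma abs_posPart_le_abs {α : Type*} [AddCommGroup α] [LinearOrder α] [IsOrderedAddMonoid α]
    (x : α) : |x⁺| ≤ |x| := by
  rw [abs_of_nonneg (posPart_nonneg x)]
  exact max_le (le_abs_self x) (abs_nonneg x)

section PositivePart

variable {α : Type*} [CommRing α] [LinearOrder α] [IsStrictOrderedRing α] {y d x : α}

lemma sq_sub_mul_posPart_le (hy : 0 ≤ y) (hd : 0 ≤ d) : (y - d * x⁺) ^ 2 ≤ (y - d * x) ^ 2 := by
  rcases le_total 0 x with hx | hx
  · rw [posPart_eq_self.mpr hx]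
  · rw [posPart_eq_zero.mpr hx]
    nlinarith [mul_nonpos_of_nonneg_of_nonpos hd hx]

lemma sq_sub_mul_posPart_lt (hy : 0 ≤ y) (hd : 0 < d) (hx : x < 0) :
    (y - d * x⁺) ^ 2 < (y - d * x) ^ 2 := by
  rw [posPart_eq_zero.mpr hx.le]
  nlinarith [mul_neg_of_pos_of_neg hd hx]

end PositivePart

lemma slopeObj_posPart_lt {p : ℕ} {d y lam b : Fin p → ℝ} (hd : ∀ i, 0 < d i)
    (hlam : Antitone lam) (hlam_nonneg : ∀ i, 0 ≤ lam i) (hy : ∀ i, 0 ≤ y i)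
    {i : Fin p} (hi : b i < 0) : slopeObj d y lam b⁺ < slopeObj d y lam b := by
  have hquad : ∑ j, (y j - d j * b⁺ j) ^ 2 < ∑ j, (y j - d j * b j) ^ 2 :=
    sum_lt_sum (fun j _ => sq_sub_mul_posPart_le (hy j) (hd j).le)
      ⟨i, mem_univ i, sq_sub_mul_posPart_lt (hy i) (hd i) hi⟩
  have hJ : Jlam lam b⁺ ≤ Jlam lam b :=
    Jlam_le_of_abs_le hlam hlam_nonneg fun j => abs_posPart_le_abs (b j)
  unfold slopeObj
  linarith

/-- If `y ⪰ 0`, the (unique) minimizer of the diagonal SLOPE objective is nonnegative. -/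
theorem slope_minimizer_nonneg {p : ℕ} (d y lam : Fin p → ℝ)
    (hd : ∀ i, 0 < d i)
    (hlam_anti : ∀ i j : Fin p, i ≤ j → lam j ≤ lam i)
    (hlam_nonneg : ∀ i, 0 ≤ lam i)
    (hy : ∀ i, 0 ≤ y i)
    (bstar : Fin p → ℝ)
    (hbstar : ∀ b, slopeObj d y lam bstar ≤ slopeObj d y lam b) :
    ∀ i, 0 ≤ bstar i := by
  intro i
  by_contra! hi
  exact (hbstar bstar⁺).not_gt <|
    slopeObj_posPart_lt hd hlam_anti hlam_nonneg hy hi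
end

section
/- Let y ∈ ℝ^p, let d₁,…,d_p be positive numbers with D = diag(d₁,…,d_p), let λ₁ ≥ … ≥ λ_p ≥ 0, and let b* be the unique minimizer of f(b) = ½‖y − Db‖₂² + J_λ(b) over ℝ^p. Let π be a permutation of {1,…,p} that places the components of the vector (d₁|y₁|,…,d_p|y_p|) in nonincreasing order, i.e. d_{π(1)}|y_{π(1)}| ≥ … ≥ d_{π(p)}|y_{π(p)}|. If b* has exactly r nonzero entries with r > 0, then the support of b* is exactly the set {π(1),…,π(r)}. -/
/-!
Compare every entry of the minimizer `b` with `λ_{r+1}`, where `r` is its number of nonzero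
entries, by perturbing one coordinate. Halving a nonzero entry `b_i` keeps it among the `r`
largest, so its penalty weight is at least `λ_{r+1}` and optimality gives `λ_{r+1} < d_i |y_i|`.
Giving a zero entry `b_j` a tiny value of the sign of `y_j` puts it behind the `r` nonzero ones,
so its penalty weight is at most `λ_{r+1}` and optimality gives `d_j |y_j| ≤ λ_{r+1}` in the
limit. Hence the support consists of the `r` largest values of `d_i |y_i|`.
-/

open Set Filter Topology

namespace Slope

variable {p : ℕ}

noncomputable def sortPerm (b : Fin p → ℝ) : Equiv.Perm (Fin p) :=
  Fin.revPerm.trans (Tuple.sort fun j => |b j|)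

/-- The (0-based) position of `|b j|` in the nonincreasing rearrangement `sortedAbs b`. -/
noncomputable def rank (b : Fin p → ℝ) (j : Fin p) : Fin p :=
  (sortPerm b).symm j

theorem sortedAbs_eq (b : Fin p → ℝ) (k : Fin p) : sortedAbs b k = |b (sortPerm b k)| := rfl

theorem sortedAbs_rank (b : Fin p → ℝ) (j : Fin p) : sortedAbs b (rank b j) = |b j| := by
  simp [sortedAbs_eq, rank]

theorem sortedAbs_antitone (b : Fin p → ℝ) : Antitone (sortedAbs b) := fun k l hkl => by
  simpa [sortedAbs, Function.comp] using
    Tuple.monotone_sort (fun j => |b j|) (Fin.rev_le_rev.mpr hkl)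

theorem ncard_setOf_val_lt {m : ℕ} (hm : m ≤ p) : {k : Fin p | (k : ℕ) < m}.ncard = m := by
  rw [ncard_eq_toFinset_card', toFinset_ofPred, Fin.card_filter_val_lt, min_eq_right hm]

theorem rank_lt_ncard_abs_le (b : Fin p → ℝ) (j : Fin p) :
    (rank b j : ℕ) < {k | |b j| ≤ |b k|}.ncard := by
  have h := ncard_le_ncard_of_injOn (s := {k : Fin p | (k : ℕ) < rank b j + 1})
    (t := {k | |b j| ≤ |b k|}) (sortPerm b)
    (fun k hk => by
      have := sortedAbs_antitone b (Fin.le_def.2 (Nat.lt_succ_iff.1 hk))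
      rwa [sortedAbs_rank, sortedAbs_eq] at this)
    (sortPerm b).injective.injOn
  rwa [ncard_setOf_val_lt (rank b j).isLt, Nat.succ_le_iff] at h

theorem ncard_abs_lt_le_rank (b : Fin p → ℝ) (j : Fin p) :
    {k | |b j| < |b k|}.ncard ≤ rank b j := by
  have h := ncard_le_ncard_of_injOn (s := {k | |b j| < |b k|})
    (t := {k : Fin p | (k : ℕ) < rank b j}) (rank b)
    (fun k (hk : |b j| < |b k|) =>
      (sortedAbs_antitone b).reflect_lt (by rwa [sortedAbs_rank, sortedAbs_rank]))
    (sortPerm b).symm.injective.injOn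
  rwa [ncard_setOf_val_lt (rank b j).isLt.le] at h

theorem sum_mul_abs_perm_le_Jlam {lam : Fin p → ℝ} (hlam : Antitone lam) (b : Fin p → ℝ)
    (σ : Equiv.Perm (Fin p)) : ∑ k, lam k * |b (σ k)| ≤ Jlam lam b := by
  have h := (hlam.monovary (sortedAbs_antitone b)).sum_mul_comp_perm_le_sum_mul
    (σ := σ.trans (sortPerm b).symm)
  simp only [Equiv.trans_apply, Equiv.apply_symm_apply, sortedAbs_eq] at h
  exact h

theorem Jlam_update_le {lam : Fin p → ℝ} (hlam : Antitone lam) (b : Fin p → ℝ) (j : Fin p)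
    (v : ℝ) :
    Jlam lam (Function.update b j v)
      ≤ Jlam lam b + lam (rank (Function.update b j v) j) * (|v| - |b j|) := by
  set e := sortPerm (Function.update b j v)
  have hdiff : Jlam lam (Function.update b j v) - ∑ k, lam k * |b (e k)|
      = lam (e.symm j) * (|v| - |b j|) := by
    rw [Jlam, ← Finset.sum_sub_distrib, Finset.sum_eq_single (e.symm j)]
    · simp [sortedAbs_eq, e, mul_sub]
    · intro k _ hk
      have hne : e k ≠ j := fun h => hk (by rw [← h, Equiv.symm_apply_apply])
      simp [sortedAbs_eq, e, Function.update_of_ne hne]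
    · simp
  have := sum_mul_abs_perm_le_Jlam hlam b e
  rw [rank]
  linarith

theorem sum_sq_update_sub (d y b : Fin p → ℝ) (j : Fin p) (v : ℝ) :
    ∑ k, (y k - d k * Function.update b j v k) ^ 2 - ∑ k, (y k - d k * b k) ^ 2
      = (y j - d j * v) ^ 2 - (y j - d j * b j) ^ 2 := by
  rw [← Finset.sum_sub_distrib, Finset.sum_eq_single j]
  · rw [Function.update_self]
  · intro k _ hk
    rw [Function.update_of_ne hk, sub_self]
  · simp

theorem eventually_lt_abs_of_ne_zero {ι : Type*} [Finite ι] (b : ι → ℝ) :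
    ∀ᶠ s in 𝓝 (0 : ℝ), ∀ k, b k ≠ 0 → s < |b k| := by
  refine eventually_all.2 fun k => ?_
  by_cases hk : b k = 0
  · simp [hk]
  · filter_upwards [eventually_lt_nhds (abs_pos.2 hk)] with s hs _ using hs

section Minimizer

variable {d y lam b : Fin p → ℝ} (hlam : Antitone lam)
  (hb : ∀ b', slopeObj d y lam b ≤ slopeObj d y lam b')
include hlam hb

theorem minimizer_update_ineq (j : Fin p) (v : ℝ) :
    0 ≤ (y j - d j * v) ^ 2 / 2 - (y j - d j * b j) ^ 2 / 2
      + lam (rank (Function.update b j v) j) * (|v| - |b j|) := by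
  have hmin := hb (Function.update b j v)
  have hsq := sum_sq_update_sub d y b j v
  have hJ := Jlam_update_le hlam b j v
  unfold slopeObj at hmin
  linarith

theorem lam_lt_of_ne_zero {i : Fin p} (hbi : b i ≠ 0) (hdi : 0 < d i) {n : Fin p}
    (hn : {k | b k ≠ 0}.ncard ≤ n) : lam n < d i * |y i| := by
  set u := Function.update b i (b i / 2)
  have hrank : (rank u i : ℕ) < {k | b k ≠ 0}.ncard := by
    refine (rank_lt_ncard_abs_le u i).trans_le (ncard_le_ncard fun k hk => ?_)
    by_cases hki : k = i
    · rwa [hki]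
    · have hk' : |b i / 2| ≤ |b k| := by simpa [u, Function.update_of_ne hki] using hk
      have : 0 < |b i / 2| := abs_pos.2 (div_ne_zero hbi two_ne_zero)
      exact abs_pos.1 (by linarith)
  have hlam_le : lam n ≤ lam (rank u i) := hlam (Fin.le_def.2 (by omega))
  have key := minimizer_update_ineq hlam hb i (b i / 2)
  rw [abs_div, abs_two] at key
  have ht : 0 < |b i| := abs_pos.2 hbi
  have hby : b i * y i ≤ |b i| * |y i| := by rw [← abs_mul]; exact le_abs_self _
  have hdb : 0 < d i ^ 2 * b i ^ 2 := by positivity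
  have : lam (rank u i) * |b i| < d i * |y i| * |b i| := by nlinarith
  exact hlam_le.trans_lt (lt_of_mul_lt_mul_right this ht.le)

theorem le_lam_of_eq_zero {j : Fin p} (hbj : b j = 0) {n : Fin p}
    (hn : (n : ℕ) ≤ {k | b k ≠ 0}.ncard) : d j * |y j| ≤ lam n := by
  have hsmall : ∀ᶠ s in 𝓝[>] 0, d j * |y j| ≤ lam n + d j ^ 2 * s / 2 := by
    filter_upwards [self_mem_nhdsWithin, nhdsWithin_le_nhds (eventually_lt_abs_of_ne_zero b)]
      with s (hs : 0 < s) hsb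
    obtain ⟨v, hv, hvy⟩ : ∃ v, |v| = s ∧ v * y j = s * |y j| := by
      rcases le_total 0 (y j) with h | h
      · exact ⟨s, abs_of_pos hs, by rw [abs_of_nonneg h]⟩
      · exact ⟨-s, by rw [abs_neg, abs_of_pos hs], by rw [abs_of_nonpos h]; ring⟩
    have hrank : n ≤ rank (Function.update b j v) j := by
      refine Fin.le_def.2 (hn.trans ((ncard_le_ncard fun k hk => ?_).trans
        (ncard_abs_lt_le_rank _ j)))
      have hkj : k ≠ j := by rintro rfl; exact hk hbj
      simpa [Function.update_of_ne hkj, hv] using hsb k hk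
    have key := minimizer_update_ineq hlam hb j v
    have hexpand : (y j - d j * v) ^ 2 / 2 - (y j - d j * b j) ^ 2 / 2
        = -(d j * (v * y j)) + d j ^ 2 * |v| ^ 2 / 2 := by
      rw [hbj, sq_abs]; ring
    rw [hexpand, hvy, hbj, abs_zero, hv, sub_zero] at key
    have : d j * |y j| * s ≤ (lam (rank (Function.update b j v) j) + d j ^ 2 * s / 2) * s := by
      linarith
    have := le_of_mul_le_mul_right this hs
    linarith [hlam hrank]
  have hlim : Tendsto (fun s => lam n + d j ^ 2 * s / 2) (𝓝[>] 0) (𝓝 (lam n)) := by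
    have hcont : Continuous fun s : ℝ => lam n + d j ^ 2 * s / 2 := by fun_prop
    simpa using (hcont.tendsto 0).mono_left nhdsWithin_le_nhds
  exact ge_of_tendsto hlim hsmall

end Minimizer

end Slope

theorem slope_support_perm_general {p : ℕ} (d y lam : Fin p → ℝ)
    (hd : ∀ i, 0 < d i)
    (hlam_anti : ∀ i j : Fin p, i ≤ j → lam j ≤ lam i)
    (π : Equiv.Perm (Fin p))
    (hπ : ∀ i j : Fin p, i ≤ j → d (π j) * |y (π j)| ≤ d (π i) * |y (π i)|)
    (bstar : Fin p → ℝ)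
    (hbstar : ∀ b, slopeObj d y lam bstar ≤ slopeObj d y lam b)
    (r : ℕ)
    (hcard : {i : Fin p | bstar i ≠ 0}.ncard = r) :
    {i : Fin p | bstar i ≠ 0} = {i : Fin p | ∃ k : Fin p, (k : ℕ) < r ∧ π k = i} := by
  have hrp : r ≤ p := hcard ▸ (ncard_le_card _).trans_eq (Nat.card_fin p)
  have hT : {i | ∃ k : Fin p, (k : ℕ) < r ∧ π k = i}.ncard = r :=
    (ncard_image_of_injective {k : Fin p | (k : ℕ) < r} π.injective).trans
      (Slope.ncard_setOf_val_lt hrp)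
  by_contra hne
  obtain ⟨i, hiS, hiT⟩ := not_subset.1 fun h => hne (eq_of_subset_of_ncard_le h (by omega))
  obtain ⟨j, ⟨k, hk, rfl⟩, hjS⟩ :=
    not_subset.1 fun h => hne (eq_of_subset_of_ncard_le h (by omega)).symm
  have hrp' : r < p := hcard ▸ (ncard_lt_card fun h => hjS (by rw [h]; exact mem_univ _)).trans_eq
    (Nat.card_fin p)
  have hπki : k ≤ π.symm i :=
    Fin.le_def.2 (hk.le.trans (not_lt.1 fun h => hiT ⟨π.symm i, h, π.apply_symm_apply i⟩))
  have hij : d i * |y i| ≤ d (π k) * |y (π k)| := by simpa using hπ k (π.symm i) hπki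
  have hi := Slope.lam_lt_of_ne_zero hlam_anti hbstar hiS (hd i) (n := ⟨r, hrp'⟩) hcard.le
  have hj := Slope.le_lam_of_eq_zero hlam_anti hbstar (not_not.1 hjS) (n := ⟨r, hrp'⟩) hcard.ge
  linarith

/-- If the minimizer `b*` of the diagonal SLOPE objective has exactly `r > 0` nonzero entries
and `π` is a permutation placing `(d₁|y₁|, …, d_p|y_p|)` in nonincreasing order, then the
support of `b*` is exactly `{π(1),…,π(r)}`. -/
theorem slope_support_perm {p : ℕ} (d y lam : Fin p → ℝ)
    (hd : ∀ i, 0 < d i)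
    (hlam_anti : ∀ i j : Fin p, i ≤ j → lam j ≤ lam i)
    (hlam_nonneg : ∀ i, 0 ≤ lam i)
    (π : Equiv.Perm (Fin p))
    (hπ : ∀ i j : Fin p, i ≤ j → d (π j) * |y (π j)| ≤ d (π i) * |y (π i)|)
    (bstar : Fin p → ℝ)
    (hbstar : ∀ b, slopeObj d y lam bstar ≤ slopeObj d y lam b)
    (r : ℕ) (hr : 0 < r)
    (hcard : {i : Fin p | bstar i ≠ 0}.ncard = r) :
    {i : Fin p | bstar i ≠ 0} = {i : Fin p | ∃ k : Fin p, (k : ℕ) < r ∧ π k = i} :=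
  slope_support_perm_general d y lam hd hlam_anti π hπ bstar hbstar r hcard
end

section
/- Let λ₁ ≥ … ≥ λ_m ≥ 0 be a nonincreasing nonnegative sequence, let I = {I_1,…,I_m} be a partition of {1,…,p}, let X ∈ ℝ^{n×p} be any matrix, and let W = diag(w₁,…,w_m) with all w_i > 0. Then the function b ↦ J_λ(W ⟦b⟧_{X,I}) is a seminorm on ℝ^p: it is absolutely homogeneous and satisfies the triangle inequality. -/
open Finset in
/-- Given a partition of the coordinates `{1,…,p}` into groups (encoded by `grp`) and a
design matrix `X ∈ ℝ^{n×p}`, `groupEffect X grp b i = ‖X_{I_i} b_{I_i}‖₂` is the Euclidean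
norm of the `i`-th group effect. -/
noncomputable def groupEffect {n p m : ℕ} (X : Matrix (Fin n) (Fin p) ℝ)
    (grp : Fin p → Fin m) (b : Fin p → ℝ) (i : Fin m) : ℝ :=
  Real.sqrt (∑ k, (∑ j ∈ univ.filter (fun j => grp j = i), X k j * b j) ^ 2)

/-!
For nonincreasing `λ`, the rearrangement inequality makes `J_λ(c)` the maximum over permutations
`σ` of `Σ_j λ_{σ j} |c_j|`. A maximum of such weighted sums is positively homogeneous and, when
`λ ≥ 0`, monotone and subadditive in `|c|`. Each group effect is the Euclidean norm of a linear
image of `b`, so `|w_i| ⟦·⟧_i` is a seminorm, and the two facts combine.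
-/

open Finset

section SortedL1

variable {m : ℕ} {lam : Fin m → ℝ}

theorem antitone_sortedAbs (b : Fin m → ℝ) : Antitone (sortedAbs b) := fun _ _ hij =>
  Tuple.monotone_sort (fun j => |b j|) (Fin.rev_le_rev.2 hij)

theorem exists_perm_Jlam_eq_sum (lam b : Fin m → ℝ) :
    ∃ σ : Equiv.Perm (Fin m), Jlam lam b = ∑ j, lam (σ j) * |b j| := by
  set τ : Equiv.Perm (Fin m) := Fin.revPerm.trans (Tuple.sort fun j => |b j|)
  refine ⟨τ.symm, ?_⟩
  rw [← Equiv.sum_comp τ]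
  simp [Jlam, sortedAbs, τ]

/-- Rearrangement inequality: the sorted pairing of `lam` with `|b|` is the largest one. -/
theorem sum_perm_mul_abs_le_Jlam (hlam : Antitone lam) (b : Fin m → ℝ)
    (σ : Equiv.Perm (Fin m)) : ∑ j, lam (σ j) * |b j| ≤ Jlam lam b := by
  set τ : Equiv.Perm (Fin m) := Fin.revPerm.trans (Tuple.sort fun j => |b j|)
  have hτ : ∀ i, |b (τ i)| = sortedAbs b i := fun _ => rfl
  calc ∑ j, lam (σ j) * |b j|
      = ∑ i, sortedAbs b i * lam (σ (τ i)) := by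
        rw [← Equiv.sum_comp τ]
        simp only [hτ, mul_comm]
    _ ≤ ∑ i, sortedAbs b i * lam i :=
        ((antitone_sortedAbs b).monovary hlam).sum_mul_comp_perm_le_sum_mul (σ := τ.trans σ)
    _ = Jlam lam b := by simp only [Jlam, mul_comm]

theorem Jlam_const_mul (hlam : Antitone lam) {c : ℝ} (hc : 0 ≤ c) (v : Fin m → ℝ) :
    Jlam lam (fun i => c * v i) = c * Jlam lam v := by
  have sum_mul_abs (σ : Equiv.Perm (Fin m)) :
      ∑ j, lam (σ j) * |c * v j| = c * ∑ j, lam (σ j) * |v j| := by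
    simp only [abs_mul, abs_of_nonneg hc, mul_sum, mul_left_comm]
  obtain ⟨σ, hσ⟩ := exists_perm_Jlam_eq_sum lam (fun i => c * v i)
  obtain ⟨τ, hτ⟩ := exists_perm_Jlam_eq_sum lam v
  apply le_antisymm
  · calc Jlam lam (fun i => c * v i) = c * ∑ j, lam (σ j) * |v j| := by rw [hσ, sum_mul_abs]
      _ ≤ c * Jlam lam v := by gcongr; exact sum_perm_mul_abs_le_Jlam hlam v σ
  · calc c * Jlam lam v = ∑ j, lam (τ j) * |c * v j| := by rw [hτ, sum_mul_abs]
      _ ≤ Jlam lam (fun i => c * v i) := sum_perm_mul_abs_le_Jlam hlam _ τ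

theorem Jlam_le_add_of_abs_le (hlam : Antitone lam) (hlam_nonneg : ∀ i, 0 ≤ lam i)
    {u v z : Fin m → ℝ} (h : ∀ i, |v i| ≤ |u i| + |z i|) :
    Jlam lam v ≤ Jlam lam u + Jlam lam z := by
  obtain ⟨σ, hσ⟩ := exists_perm_Jlam_eq_sum lam v
  calc Jlam lam v = ∑ j, lam (σ j) * |v j| := hσ
    _ ≤ ∑ j, (lam (σ j) * |u j| + lam (σ j) * |z j|) := by
        gcongr with j
        rw [← mul_add]
        exact mul_le_mul_of_nonneg_left (h j) (hlam_nonneg _)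
    _ = ∑ j, lam (σ j) * |u j| + ∑ j, lam (σ j) * |z j| := sum_add_distrib
    _ ≤ Jlam lam u + Jlam lam z :=
        add_le_add (sum_perm_mul_abs_le_Jlam hlam u σ) (sum_perm_mul_abs_le_Jlam hlam z σ)

end SortedL1

section GroupEffect

variable {n p m : ℕ} (X : Matrix (Fin n) (Fin p) ℝ) (grp : Fin p → Fin m)

/-- `b ↦ X_{I_i} b_{I_i}`, as a vector of the Euclidean space `ℝⁿ`. -/
noncomputable def groupPredictor (i : Fin m) : (Fin p → ℝ) →ₗ[ℝ] EuclideanSpace ℝ (Fin n) where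
  toFun b := WithLp.toLp 2 fun k => ∑ j ∈ univ.filter (fun j => grp j = i), X k j * b j
  map_add' a b := by ext k; simp [mul_add, sum_add_distrib]
  map_smul' t b := by ext k; simp [mul_sum, mul_left_comm]

theorem groupEffect_eq_norm (b : Fin p → ℝ) (i : Fin m) :
    groupEffect X grp b i = ‖groupPredictor X grp i b‖ := by
  simp [groupEffect, groupPredictor, EuclideanSpace.norm_eq]

theorem groupEffect_smul (t : ℝ) (b : Fin p → ℝ) (i : Fin m) :
    groupEffect X grp (t • b) i = |t| * groupEffect X grp b i := by
  simp only [groupEffect_eq_norm, map_smul, norm_smul, Real.norm_eq_abs]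

theorem groupEffect_add_le (a b : Fin p → ℝ) (i : Fin m) :
    groupEffect X grp (a + b) i ≤ groupEffect X grp a i + groupEffect X grp b i := by
  simp only [groupEffect_eq_norm, map_add]
  exact norm_add_le _ _

end GroupEffect

theorem groupSortedL1_is_seminorm_general {n p m : ℕ} (X : Matrix (Fin n) (Fin p) ℝ)
    (grp : Fin p → Fin m)
    (lam : Fin m → ℝ)
    (hlam_anti : ∀ i j : Fin m, i ≤ j → lam j ≤ lam i)
    (hlam_nonneg : ∀ i, 0 ≤ lam i)
    (w : Fin m → ℝ) :
    (∀ (t : ℝ) (b : Fin p → ℝ),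
        Jlam lam (fun i => w i * groupEffect X grp (t • b) i) =
          |t| * Jlam lam (fun i => w i * groupEffect X grp b i)) ∧
    (∀ a b : Fin p → ℝ,
        Jlam lam (fun i => w i * groupEffect X grp (a + b) i) ≤
          Jlam lam (fun i => w i * groupEffect X grp a i) +
            Jlam lam (fun i => w i * groupEffect X grp b i)) := by
  have hlam : Antitone lam := fun i j hij => hlam_anti i j hij
  refine ⟨fun t b => ?_, fun a b => ?_⟩
  · simp only [groupEffect_smul, mul_left_comm (w _) |t|]
    exact Jlam_const_mul hlam (abs_nonneg t) _
  · refine Jlam_le_add_of_abs_le hlam hlam_nonneg fun i => ?_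
    have hnonneg : ∀ c, 0 ≤ groupEffect X grp c i := fun _ => Real.sqrt_nonneg _
    simp only [abs_mul, abs_of_nonneg (hnonneg _), ← mul_add]
    exact mul_le_mul_of_nonneg_left (groupEffect_add_le X grp a b i) (abs_nonneg _)

/-- The function `b ↦ J_λ(W ⟦b⟧_{X,I})` is a seminorm on `ℝ^p` for any nonincreasing
nonnegative `λ`, partition `I` of the coordinates, design matrix `X` and positive weights:
it is absolutely homogeneous and satisfies the triangle inequality. -/
theorem groupSortedL1_is_seminorm {n p m : ℕ} (X : Matrix (Fin n) (Fin p) ℝ)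
    (grp : Fin p → Fin m) (hgrp : Function.Surjective grp)
    (lam : Fin m → ℝ)
    (hlam_anti : ∀ i j : Fin m, i ≤ j → lam j ≤ lam i)
    (hlam_nonneg : ∀ i, 0 ≤ lam i)
    (w : Fin m → ℝ) (hw : ∀ i, 0 < w i) :
    (∀ (t : ℝ) (b : Fin p → ℝ),
        Jlam lam (fun i => w i * groupEffect X grp (t • b) i) =
          |t| * Jlam lam (fun i => w i * groupEffect X grp b i)) ∧
    (∀ a b : Fin p → ℝ,
        Jlam lam (fun i => w i * groupEffect X grp (a + b) i) ≤
          Jlam lam (fun i => w i * groupEffect X grp a i) +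
            Jlam lam (fun i => w i * groupEffect X grp b i)) :=
  groupSortedL1_is_seminorm_general X grp lam hlam_anti hlam_nonneg w
end
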